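/- In the multi-parameter 2×2 quantum matrix algebra O_{q,P,Q}(M(2)) over the field K = ℚ(q, p21, q21), with relations Z22·Z11 = p21^2 q21^2 Z11·Z22 + (q^2−1) p21^2 Z12·Z21, Z22·Z21 = q21^2 Z21·Z22, Z12·Z11 = q21^2 Z11·Z12, Z22·Z12 = q^2 p21^2 Z12·Z22, Z21·Z12 = q^2 p21^2 q21^{−2} Z12·Z21, Z21·Z11 = q^2 p21^2 Z11·Z21, the quantum determinant det_q = Z11·Z22 − q21^{−2} Z12·Z21 satisfies det_q·Z11 = p21^2 q21^2 Z11·det_q and Z22·det_q = p21^2 q21^2 det_q·Z22. -/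
import Mathlib


noncomputable section

/-- The field K = ℚ(q, p21, q21) of rational functions in three variables. -/
abbrev K : Type := FractionRing (MvPolynomial (Fin 3) ℚ)

def q : K := algebraMap (MvPolynomial (Fin 3) ℚ) K (MvPolynomial.X 0)
def p21 : K := algebraMap (MvPolynomial (Fin 3) ℚ) K (MvPolynomial.X 1)
def q21 : K := algebraMap (MvPolynomial (Fin 3) ℚ) K (MvPolynomial.X 2)

/-- Generators of the 2×2 quantum matrix algebra. -/
inductive Gen : Type | z11 | z12 | z21 | z22

open Gen

/-- The generators viewed in the free algebra. -/
def ι : Gen → FreeAlgebra K Gen := FreeAlgebra.ι K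

/-- The defining relations of the multi-parameter 2×2 quantum matrix algebra
O_{q,P,Q}(M(2)). -/
inductive QRel : FreeAlgebra K Gen → FreeAlgebra K Gen → Prop
  | r1 : QRel (ι z22 * ι z11)
      ((p21 ^ 2 * q21 ^ 2) • (ι z11 * ι z22) + ((q ^ 2 - 1) * p21 ^ 2) • (ι z12 * ι z21))
  | r2 : QRel (ι z22 * ι z21) ((q21 ^ 2) • (ι z21 * ι z22))
  | r3 : QRel (ι z12 * ι z11) ((q21 ^ 2) • (ι z11 * ι z12))
  | r4 : QRel (ι z22 * ι z12) ((q ^ 2 * p21 ^ 2) • (ι z12 * ι z22))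
  | r5 : QRel (ι z21 * ι z12) ((q ^ 2 * p21 ^ 2 * q21 ^ (-2 : ℤ)) • (ι z12 * ι z21))
  | r6 : QRel (ι z21 * ι z11) ((q ^ 2 * p21 ^ 2) • (ι z11 * ι z21))

/-- The multi-parameter 2×2 quantum matrix algebra O_{q,P,Q}(M(2)). -/
abbrev O : Type := RingQuot QRel

/-- The images of the generators in O. -/
def Z (g : Gen) : O := RingQuot.mkAlgHom K QRel (ι g)

/-- The quantum determinant det_q = Z11·Z22 − q21⁻²·Z12·Z21. -/
def detq : O := Z z11 * Z z22 - (q21 ^ (-2 : ℤ)) • (Z z12 * Z z21)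

lemma hq21 : q21 ≠ 0 := by
  unfold q21
  rw [Ne, IsFractionRing.to_map_eq_zero_iff]
  exact MvPolynomial.X_ne_zero 2

lemma hc : (q21 : K) ^ (-2 : ℤ) = (q21 ^ 2)⁻¹ := by
  rw [zpow_neg, zpow_two, sq]

lemma R1 : Z z22 * Z z11
    = (p21 ^ 2 * q21 ^ 2) • (Z z11 * Z z22) + ((q ^ 2 - 1) * p21 ^ 2) • (Z z12 * Z z21) := by
  simpa [Z, map_mul, map_add, map_smul] using RingQuot.mkAlgHom_rel K QRel.r1

lemma R2 : Z z22 * Z z21 = (q21 ^ 2) • (Z z21 * Z z22) := by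
  simpa [Z, map_mul, map_smul] using RingQuot.mkAlgHom_rel K QRel.r2

lemma R3 : Z z12 * Z z11 = (q21 ^ 2) • (Z z11 * Z z12) := by
  simpa [Z, map_mul, map_smul] using RingQuot.mkAlgHom_rel K QRel.r3

lemma R4 : Z z22 * Z z12 = (q ^ 2 * p21 ^ 2) • (Z z12 * Z z22) := by
  simpa [Z, map_mul, map_smul] using RingQuot.mkAlgHom_rel K QRel.r4

lemma R6 : Z z21 * Z z11 = (q ^ 2 * p21 ^ 2) • (Z z11 * Z z21) := by
  simpa [Z, map_mul, map_smul] using RingQuot.mkAlgHom_rel K QRel.r6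

lemma R1' (x : O) : Z z22 * (Z z11 * x)
    = (p21 ^ 2 * q21 ^ 2) • (Z z11 * (Z z22 * x))
      + ((q ^ 2 - 1) * p21 ^ 2) • (Z z12 * (Z z21 * x)) := by
  rw [← mul_assoc, R1, add_mul, smul_mul_assoc, smul_mul_assoc, mul_assoc, mul_assoc]

lemma R2' (x : O) : Z z22 * (Z z21 * x) = (q21 ^ 2) • (Z z21 * (Z z22 * x)) := by
  rw [← mul_assoc, R2, smul_mul_assoc, mul_assoc]

lemma R3' (x : O) : Z z12 * (Z z11 * x) = (q21 ^ 2) • (Z z11 * (Z z12 * x)) := by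
  rw [← mul_assoc, R3, smul_mul_assoc, mul_assoc]

lemma R4' (x : O) : Z z22 * (Z z12 * x) = (q ^ 2 * p21 ^ 2) • (Z z12 * (Z z22 * x)) := by
  rw [← mul_assoc, R4, smul_mul_assoc, mul_assoc]

lemma R6' (x : O) : Z z21 * (Z z11 * x) = (q ^ 2 * p21 ^ 2) • (Z z11 * (Z z21 * x)) := by
  rw [← mul_assoc, R6, smul_mul_assoc, mul_assoc]

lemma subm (a b c : O) : (a - b) * c = a * c - b * c := sub_mul a b c
lemma msub (a b c : O) : a * (b - c) = a * b - a * c := mul_sub a b c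
lemma ssub (k : K) (a b : O) : k • (a - b) = k • a - k • b := smul_sub k a b
lemma oadd_sub (a b c : O) : a + b - c = a + (b - c) := add_sub_assoc a b c
lemma osub_smul (k l : K) (x : O) : (k - l) • x = k • x - l • x := sub_smul k l x
lemma osub_eq (a b : O) : a - b = a + -b := sub_eq_add_neg a b
lemma oneg_smul (k : K) (x : O) : -(k • x) = (-k) • x := (neg_smul k x).symm

/-- det_q·Z11 = p21² q21² Z11·det_q and Z22·det_q = p21² q21² det_q·Z22 in the
multi-parameter 2×2 quantum matrix algebra. -/
theorem detq_commutes_diag :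
    detq * Z z11 = (p21 ^ 2 * q21 ^ 2) • (Z z11 * detq) ∧
    Z z22 * detq = (p21 ^ 2 * q21 ^ 2) • (detq * Z z22) := by
  have h := hq21
  constructor
  · simp only [detq, hc, subm, msub, ssub, add_mul, mul_add, smul_add, smul_mul_assoc,
      mul_smul_comm, smul_smul, mul_assoc, R1, R1', R2, R2', R3, R3', R4, R4', R6, R6']
    rw [oadd_sub, ← osub_smul, osub_eq, oneg_smul]
    congr 1
    congr 1
    field_simp
    ring
  · simp only [detq, hc, subm, msub, ssub, add_mul, mul_add, smul_add, smul_mul_assoc,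
      mul_smul_comm, smul_smul, mul_assoc, R1, R1', R2, R2', R3, R3', R4, R4', R6, R6']
    rw [oadd_sub, ← osub_smul, osub_eq, oneg_smul]
    congr 1
    congr 1
    field_simp
    ring
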